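/- Let f : 2^N → ℝ be a submodular function on a finite ground set N with multilinear extension F, let x ∈ [0,1]^N, and let T ⊆ N be a set with x_u = 0 for every u ∈ T. Then F(x + 1_T) ≤ F(x) + Σ_{u∈T} ∂_u F(x). -/
import Mathlib

open Finset

/-- A set function `f` on a finite ground set is submodular if
`f(A ∪ {u}) − f(A) ≥ f(B ∪ {u}) − f(B)` for all `A ⊆ B` and `u ∉ B`. -/
def Submodular {α : Type*} [DecidableEq α] (f : Finset α → ℝ) : Prop :=
  ∀ A B : Finset α, A ⊆ B → ∀ u ∉ B, f (insert u A) - f A ≥ f (insert u B) - f B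

/-- The multilinear extension `F` of a set function `f`. -/
noncomputable def multilinear {α : Type*} [Fintype α] [DecidableEq α]
    (f : Finset α → ℝ) (x : α → ℝ) : ℝ :=
  ∑ A : Finset α, f A * ((∏ u ∈ A, x u) * ∏ u ∈ Aᶜ, (1 - x u))

/-- The partial derivative `∂_u F(x) = F(x ∨ 1_u) − F(x ∧ 1_{N∖{u}})` of the multilinear
extension of `f`, where `∨`/`∧` are the coordinate-wise max/min of vectors. -/
noncomputable def mlDeriv {α : Type*} [Fintype α] [DecidableEq α]
    (f : Finset α → ℝ) (u : α) (x : α → ℝ) : ℝ :=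
  multilinear f (fun v => max (x v) (if v = u then 1 else 0))
    - multilinear f (fun v => min (x v) (if v = u then 0 else 1))

section Aux
set_option linter.unusedSectionVars false

variable {α : Type*} [Fintype α] [DecidableEq α]

/-- Pair up sets containing `v` with those not containing `v`. -/
lemma pair_filter (v : α) (s : Finset (Finset α)) (g : Finset α → ℝ)
    (hins : ∀ B ∈ s, v ∉ B → insert v B ∈ s)
    (hers : ∀ B ∈ s, v ∈ B → B.erase v ∈ s) :
    ∑ A ∈ s, g A = ∑ B ∈ s.filter (fun B => v ∉ B), (g (insert v B) + g B) := by
  rw [Finset.sum_add_distrib]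
  rw [← Finset.sum_filter_add_sum_filter_not s (fun B => v ∈ B) g]
  congr 1
  apply Finset.sum_nbij' (i := fun A => A.erase v) (j := fun B => insert v B)
  · intro A hA
    simp only [mem_filter] at hA ⊢
    exact ⟨hers A hA.1 hA.2, Finset.notMem_erase v A⟩
  · intro B hB
    simp only [mem_filter] at hB ⊢
    exact ⟨hins B hB.1 hB.2, Finset.mem_insert_self v B⟩
  · intro A hA
    simp only [mem_filter] at hA
    exact Finset.insert_erase hA.2
  · intro B hB
    simp only [mem_filter] at hB
    exact Finset.erase_insert hB.2
  · intro A hA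
    simp only [mem_filter] at hA
    rw [Finset.insert_erase hA.2]

/-- The multilinear extension as an affine function of the `u`-th coordinate. -/
lemma multilinear_update (f : Finset α → ℝ) (u : α) (y : α → ℝ) (c : ℝ) :
    multilinear f (Function.update y u c)
      = ∑ B ∈ univ.filter (fun B : Finset α => u ∉ B),
          ((c * f (insert u B) + (1 - c) * f B) *
            ((∏ v ∈ B, y v) * ∏ v ∈ (insert u B)ᶜ, (1 - y v))) := by
  unfold multilinear
  rw [pair_filter u univ _ (by simp) (by simp)]
  apply Finset.sum_congr rfl
  intro B hB
  simp only [mem_filter] at hB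
  obtain ⟨-, hu⟩ := hB
  have h1 : ∏ v ∈ insert u B, Function.update y u c v = c * ∏ v ∈ B, y v := by
    rw [Finset.prod_insert hu, Function.update_self]
    congr 1
    apply Finset.prod_congr rfl
    intro v hv
    exact Function.update_of_ne (by rintro rfl; exact hu hv) _ _
  have h2 : ∏ v ∈ (insert u B)ᶜ, (1 - Function.update y u c v)
      = ∏ v ∈ (insert u B)ᶜ, (1 - y v) := by
    apply Finset.prod_congr rfl
    intro v hv
    have : v ≠ u := by
      intro h; subst h
      exact (Finset.mem_compl.mp hv) (Finset.mem_insert_self v B)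
    rw [Function.update_of_ne this]
  have h3 : ∏ v ∈ Bᶜ, (1 - Function.update y u c v)
      = (1 - c) * ∏ v ∈ (insert u B)ᶜ, (1 - y v) := by
    have hmem : u ∈ Bᶜ := Finset.mem_compl.mpr hu
    rw [← Finset.mul_prod_erase Bᶜ _ hmem, Function.update_self]
    congr 1
    rw [← Finset.compl_insert]
    exact h2
  have h4 : ∏ v ∈ B, Function.update y u c v = ∏ v ∈ B, y v := by
    apply Finset.prod_congr rfl
    intro v hv
    exact Function.update_of_ne (by rintro rfl; exact hu hv) _ _
  rw [h1, h2, h3, h4]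
  ring

/-- The discrete derivative of the multilinear extension in coordinate `u`. -/
noncomputable def Du (f : Finset α → ℝ) (u : α) (y : α → ℝ) : ℝ :=
  ∑ B ∈ univ.filter (fun B : Finset α => u ∉ B),
    (f (insert u B) - f B) * ((∏ v ∈ B, y v) * ∏ v ∈ (insert u B)ᶜ, (1 - y v))

lemma multilinear_update_sub (f : Finset α → ℝ) (u : α) (y : α → ℝ) :
    multilinear f (Function.update y u 1) - multilinear f (Function.update y u 0)
      = Du f u y := by
  rw [multilinear_update, multilinear_update, Du, ← Finset.sum_sub_distrib]
  apply Finset.sum_congr rfl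
  intro B _
  ring

/-- Second splitting: `Du` as an affine function of the `v`-th coordinate. -/
lemma Du_update (f : Finset α → ℝ) (u v : α) (hne : u ≠ v) (y : α → ℝ) (c : ℝ) :
    Du f u (Function.update y v c)
      = ∑ B ∈ (univ.filter (fun B : Finset α => u ∉ B)).filter (fun B => v ∉ B),
          ((c * (f (insert u (insert v B)) - f (insert v B))
              + (1 - c) * (f (insert u B) - f B)) *
            ((∏ w ∈ B, y w) * ∏ w ∈ (insert u (insert v B))ᶜ, (1 - y w))) := by
  unfold Du
  rw [pair_filter v _ _ ?closure (by intro B hB _; simp only [mem_filter] at hB ⊢; exact ⟨Finset.mem_univ _, fun h => hB.2 (Finset.mem_erase.mp h).2⟩)]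
  case closure =>
    intro B hB hvB
    simp only [mem_filter] at hB ⊢
    refine ⟨Finset.mem_univ _, ?_⟩
    simp only [Finset.mem_insert]
    push_neg
    exact ⟨hne, hB.2⟩
  apply Finset.sum_congr rfl
  intro B hB
  simp only [mem_filter] at hB
  obtain ⟨⟨-, hu⟩, hv⟩ := hB
  have huv : u ∉ insert v B := by
    simp only [Finset.mem_insert]; push_neg; exact ⟨hne, hu⟩
  have h1 : ∏ w ∈ insert v B, Function.update y v c w = c * ∏ w ∈ B, y w := by
    rw [Finset.prod_insert hv, Function.update_self]
    congr 1
    apply Finset.prod_congr rfl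
    intro w hw
    exact Function.update_of_ne (by rintro rfl; exact hv hw) _ _
  have h2 : ∏ w ∈ (insert u (insert v B))ᶜ, (1 - Function.update y v c w)
      = ∏ w ∈ (insert u (insert v B))ᶜ, (1 - y w) := by
    apply Finset.prod_congr rfl
    intro w hw
    have : w ≠ v := by
      intro h; subst h
      exact (Finset.mem_compl.mp hw) (Finset.mem_insert_of_mem (Finset.mem_insert_self w B))
    rw [Function.update_of_ne this]
  have h3 : ∏ w ∈ B, Function.update y v c w = ∏ w ∈ B, y w := by
    apply Finset.prod_congr rfl
    intro w hw
    exact Function.update_of_ne (by rintro rfl; exact hv hw) _ _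
  have h4 : ∏ w ∈ (insert u B)ᶜ, (1 - Function.update y v c w)
      = (1 - c) * ∏ w ∈ (insert u (insert v B))ᶜ, (1 - y w) := by
    have hmem : v ∈ (insert u B)ᶜ := by
      rw [Finset.mem_compl, Finset.mem_insert]
      push_neg
      exact ⟨fun h => hne h.symm, hv⟩
    rw [← Finset.mul_prod_erase _ _ hmem, Function.update_self]
    have hset : ((insert u B)ᶜ).erase v = (insert u (insert v B))ᶜ := by
      ext w
      simp only [Finset.mem_erase, Finset.mem_compl, Finset.mem_insert]
      tauto
    rw [hset, h2]
  rw [h1, h2, h3, h4]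
  ring

/-- Raising another coordinate from `0` to `1` decreases the derivative (submodularity). -/
lemma Du_update_le (f : Finset α → ℝ) (hsub : Submodular f) (u v : α) (hne : u ≠ v)
    (y : α → ℝ) (hy : ∀ w, 0 ≤ y w ∧ y w ≤ 1) :
    Du f u (Function.update y v 1) ≤ Du f u (Function.update y v 0) := by
  rw [Du_update f u v hne y 1, Du_update f u v hne y 0]
  apply Finset.sum_le_sum
  intro B hB
  simp only [mem_filter] at hB
  obtain ⟨⟨-, hu⟩, hv⟩ := hB
  have hW : 0 ≤ (∏ w ∈ B, y w) * ∏ w ∈ (insert u (insert v B))ᶜ, (1 - y w) := by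
    apply mul_nonneg
    · exact Finset.prod_nonneg fun w _ => (hy w).1
    · exact Finset.prod_nonneg fun w _ => by linarith [(hy w).2]
  have hkey : f (insert u (insert v B)) - f (insert v B) ≤ f (insert u B) - f B := by
    have huv : u ∉ insert v B := by
      simp only [Finset.mem_insert]; push_neg; exact ⟨hne, hu⟩
    exact hsub B (insert v B) (Finset.subset_insert v B) u huv
  have := mul_le_mul_of_nonneg_right hkey hW
  nlinarith [this]

/-- Set coordinates in `S` to one. -/
noncomputable def setOne (x : α → ℝ) (S : Finset α) : α → ℝ :=
  fun v => if v ∈ S then 1 else x v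

lemma setOne_empty (x : α → ℝ) : setOne x ∅ = x := by
  funext v; simp [setOne]

lemma setOne_insert (x : α → ℝ) (S : Finset α) (v : α) (hv : v ∉ S) :
    setOne x (insert v S) = Function.update (setOne x S) v 1 := by
  funext w
  by_cases h : w = v
  · subst h; simp [setOne]
  · simp [setOne, Function.update_of_ne h, Finset.mem_insert, h]

lemma setOne_self_update (x : α → ℝ) (S : Finset α) (v : α) (hv : v ∉ S) (hx : x v = 0) :
    setOne x S = Function.update (setOne x S) v 0 := by
  funext w
  by_cases h : w = v
  · subst h; simp [setOne, hv, hx]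
  · simp [Function.update_of_ne h]

lemma setOne_bounds (x : α → ℝ) (hx : ∀ w, x w ∈ Set.Icc (0:ℝ) 1) (S : Finset α) :
    ∀ w, 0 ≤ setOne x S w ∧ setOne x S w ≤ 1 := by
  intro w
  unfold setOne
  by_cases h : w ∈ S <;> simp [h]
  · exact ⟨(hx w).1, (hx w).2⟩

end Aux

/-- For submodular `f` with multilinear extension `F`, `x ∈ [0,1]^N`,
and a set `T` on which `x` vanishes: `F(x + 1_T) ≤ F(x) + Σ_{u∈T} ∂_u F(x)`. -/
theorem stmt_19 {α : Type*} [Fintype α] [DecidableEq α] (f : Finset α → ℝ)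
    (hsub : Submodular f)
    (x : α → ℝ) (hx : ∀ v, x v ∈ Set.Icc (0 : ℝ) 1)
    (T : Finset α) (hT : ∀ v ∈ T, x v = 0) :
    multilinear f (fun v => x v + if v ∈ T then 1 else 0)
      ≤ multilinear f x + ∑ u ∈ T, mlDeriv f u x := by
  -- Step 1 : mlDeriv f u x = Du f u x for u ∈ T.
  have hderiv : ∀ u ∈ T, mlDeriv f u x = Du f u x := by
    intro u hu
    have hmax : (fun v => max (x v) (if v = u then 1 else 0)) = Function.update x u 1 := by
      funext v
      by_cases h : v = u
      · subst h; simp [max_eq_right (hx v).2]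
      · simp [h, Function.update_of_ne h, max_eq_left (hx v).1]
    have hmin : (fun v => min (x v) (if v = u then 0 else 1)) = Function.update x u 0 := by
      funext v
      by_cases h : v = u
      · subst h; simp [hT v hu]
      · simp [h, Function.update_of_ne h, min_eq_left (hx v).2]
    rw [mlDeriv, hmax, hmin, multilinear_update_sub]
  -- Step 2 : monotonicity of Du in the other coordinates.
  have hDu_mono : ∀ u ∈ T, ∀ S : Finset α, S ⊆ T → u ∉ S →
      Du f u (setOne x S) ≤ Du f u x := by
    intro u hu S
    induction S using Finset.induction_on with
    | empty => intro _ _; rw [setOne_empty]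
    | @insert v S hvS ih =>
      intro hsubT huS
      have hvT : v ∈ T := hsubT (Finset.mem_insert_self v S)
      have hune : u ≠ v := fun h => huS (h ▸ Finset.mem_insert_self v S)
      rw [setOne_insert x S v hvS]
      calc Du f u (Function.update (setOne x S) v 1)
          ≤ Du f u (Function.update (setOne x S) v 0) :=
            Du_update_le f hsub u v hune _ (setOne_bounds x hx S)
        _ = Du f u (setOne x S) := by
            rw [← setOne_self_update x S v hvS (hT v hvT)]
        _ ≤ Du f u x := ih (fun w hw => hsubT (Finset.mem_insert_of_mem hw))
            (fun h => huS (Finset.mem_insert_of_mem h))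
  -- Step 3 : main induction.
  have hmain : ∀ S : Finset α, S ⊆ T →
      multilinear f (setOne x S) ≤ multilinear f x + ∑ u ∈ S, Du f u x := by
    intro S
    induction S using Finset.induction_on with
    | empty => intro _; simp [setOne_empty]
    | @insert v S hvS ih =>
      intro hsubT
      have hvT : v ∈ T := hsubT (Finset.mem_insert_self v S)
      have hsub' : S ⊆ T := fun w hw => hsubT (Finset.mem_insert_of_mem hw)
      have step : multilinear f (setOne x (insert v S)) =
          multilinear f (setOne x S) + Du f v (setOne x S) := by
        rw [setOne_insert x S v hvS]
        have := multilinear_update_sub f v (setOne x S)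
        rw [← setOne_self_update x S v hvS (hT v hvT)] at this
        linarith
      rw [step, Finset.sum_insert hvS]
      have h1 := ih hsub'
      have h2 := hDu_mono v hvT S hsub' hvS
      linarith
  -- Step 4 : identify the left-hand side vector.
  have hvec : (fun v => x v + if v ∈ T then 1 else 0) = setOne x T := by
    funext v
    by_cases h : v ∈ T
    · simp [setOne, h, hT v h]
    · simp [setOne, h]
  rw [hvec]
  calc multilinear f (setOne x T) ≤ multilinear f x + ∑ u ∈ T, Du f u x := hmain T le_rfl
    _ = multilinear f x + ∑ u ∈ T, mlDeriv f u x := by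
        congr 1
        exact (Finset.sum_congr rfl hderiv).symm
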